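/- Let S = (I, M, O) be a correlation scenario, let (S', S'^⊥) be a disjoint bipartition of S, and let K' ⊆ NS(S') and K'' ⊆ NS(S'^⊥) be convex polytopes (convex hulls of finite sets of behaviours). Then conv(K' ⊙ K'') is a convex polytope, and its extreme points are exactly the behaviour products of extreme points: Ext( conv(K' ⊙ K'') ) = Ext(K') ⊙ Ext(K''). -/

import Mathlib

open scoped Classical
open MeasureTheory

noncomputable section

/-- A correlation scenario `S = (I, M, O)`: a finite set `I` of parties, for each party `i`
a finite nonempty set `M i` of inputs, and for each input `x : M i` a finite set `O i x`
of outputs with at least two elements. -/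
structure Scenario where
  I : Type
  M : I → Type
  O : (i : I) → M i → Type
  fI : Fintype I
  fM : ∀ i, Fintype (M i)
  fO : ∀ i x, Fintype (O i x)
  hM : ∀ i, Nonempty (M i)
  hO : ∀ i x, 2 ≤ Fintype.card (O i x)

attribute [instance] Scenario.fI Scenario.fM Scenario.fO Scenario.hM

instance Scenario.instNonemptyO (S : Scenario) (i : S.I) (x : S.M i) : Nonempty (S.O i x) :=
  Fintype.card_pos_iff.mp (by have := S.hO i x; omega)

/-- Input strings of a scenario. -/
abbrev InputString (S : Scenario) := ∀ i, S.M i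

/-- Output strings for a given input string. -/
abbrev OutputString (S : Scenario) (x : InputString S) := ∀ i, S.O i (x i)

/-- The ambient real vector space with one coordinate `℘(a|x)` for each pair of an input
string `x` and an output string `a`. -/
abbrev Behaviour (S : Scenario) := (x : InputString S) → OutputString S x → ℝ

/-- `p` is a behaviour: each `p x` is a probability distribution on output strings. -/
def IsBehaviour (S : Scenario) (p : Behaviour S) : Prop :=
  (∀ x a, 0 ≤ p x a) ∧ ∀ x, ∑ a, p x a = 1

/-- The marginal `℘(a_V | x)` of a behaviour on the set `V` of parties, evaluated at the
restriction of `a` to `V`. -/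
def marg (S : Scenario) (p : Behaviour S) (x : InputString S) (V : Set S.I)
    (a : OutputString S x) : ℝ :=
  ∑ b : OutputString S x, if ∀ i ∈ V, b i = a i then p x b else 0

/-- No-signalling: replacing the input of party `i` (all other inputs fixed) leaves the
marginal on `I ∖ {i}` unchanged. -/
def NoSignalling (S : Scenario) (p : Behaviour S) : Prop :=
  ∀ (i : S.I) (x : InputString S) (m : S.M i)
    (a : OutputString S x) (a' : OutputString S (Function.update x i m)),
    (∀ j, j ≠ i → HEq (a j) (a' j)) →
    marg S p x {i}ᶜ a = marg S p (Function.update x i m) {i}ᶜ a'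

/-- The set `NS(S)` of no-signalling behaviours. -/
def NSset (S : Scenario) : Set (Behaviour S) :=
  {p | IsBehaviour S p ∧ NoSignalling S p}

/-- A behaviour is predictable if all its probabilities are `0` or `1`. -/
def Predictable (S : Scenario) (p : Behaviour S) : Prop :=
  ∀ x a, p x a = 0 ∨ p x a = 1

/-- The set `P_NS(S)` of predictable no-signalling behaviours. -/
def PNS (S : Scenario) : Set (Behaviour S) :=
  {p | IsBehaviour S p ∧ NoSignalling S p ∧ Predictable S p}

/-- The Bell-local polytope `B(S) = conv(P_NS(S))`. -/
def BellSet (S : Scenario) : Set (Behaviour S) :=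
  convexHull ℝ (PNS S)

/-- `F_x = {i : x i ∈ M' i}`, the context-dependent set of parties choosing an input in the
distinguished collection `M'`. -/
def Fup (S : Scenario) (M' : ∀ i, Set (S.M i)) (x : InputString S) : Set S.I :=
  {i | x i ∈ M' i}

/-- Partial predictability w.r.t. the collection `M'`: every marginal on a subset of `F_x`
is `{0,1}`-valued. -/
def PartPredictable (S : Scenario) (M' : ∀ i, Set (S.M i)) (p : Behaviour S) : Prop :=
  ∀ (x : InputString S) (V : Set S.I), V ⊆ Fup S M' x →
    ∀ a, marg S p x V a = 0 ∨ marg S p x V a = 1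

/-- The set `PP(S, M')` of behaviours partially predictable w.r.t. `M'`. -/
def PPset (S : Scenario) (M' : ∀ i, Set (S.M i)) : Set (Behaviour S) :=
  {p | IsBehaviour S p ∧ PartPredictable S M' p}

/-- The set `PP_NS(S, M')` of partially predictable no-signalling behaviours. -/
def PPNS (S : Scenario) (M' : ∀ i, Set (S.M i)) : Set (Behaviour S) :=
  {p | IsBehaviour S p ∧ NoSignalling S p ∧ PartPredictable S M' p}

/-- The partially deterministic polytope `PD(S, M') = conv(PP_NS(S, M'))`. -/
def PD (S : Scenario) (M' : ∀ i, Set (S.M i)) : Set (Behaviour S) :=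
  convexHull ℝ (PPNS S M')

/-- The restricted scenario `S_{|M'}`: parties `{i : M' i ≠ ∅}`, input sets `M' i`, same
output sets. -/
def Scenario.restrict (S : Scenario) (M' : ∀ i, Set (S.M i)) : Scenario where
  I := {i : S.I // (M' i).Nonempty}
  M := fun i => ↥(M' i.1)
  O := fun i x => S.O i.1 x.1
  fI := Subtype.fintype _
  fM := fun i => (Set.toFinite (M' i.1)).fintype
  fO := fun i x => S.fO i.1 x.1
  hM := fun i => i.2.to_subtype
  hO := fun i x => S.hO i.1 x.1

/-- A bipartition `(S_{|M'}, S_{|M'^⊥})` is nonredundant unless `M'` is everything or nothing. -/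
def Nonredundant (S : Scenario) (M' : ∀ i, Set (S.M i)) : Prop :=
  ¬ (∀ i, M' i = Set.univ) ∧ ¬ (∀ i, M' i = (∅ : Set (S.M i)))

/-- Extension of an input string of `S` to an input string of the restricted scenario
`S_{|M'}` (choosing arbitrary inputs for the parties `i` with `x i ∉ M' i`). -/
def extendInput (S : Scenario) (M' : ∀ i, Set (S.M i)) (x : InputString S) :
    InputString (S.restrict M') :=
  fun i => if h : x i.1 ∈ M' i.1 then ⟨x i.1, h⟩ else ⟨i.2.some, i.2.some_mem⟩

/-- Extension of an output string of `S` to an output string of the restricted scenario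
`S_{|M'}` at the extended input string. -/
def extendOutput (S : Scenario) (M' : ∀ i, Set (S.M i)) (x : InputString S)
    (a : OutputString S x) : OutputString (S.restrict M') (extendInput S M' x) :=
  fun i =>
    if h : x i.1 ∈ M' i.1 then
      cast (congrArg (S.O i.1)
        (show x i.1 = (extendInput S M' x i).1 by
          have e : extendInput S M' x i = ⟨x i.1, h⟩ := dif_pos h
          rw [e]))
        (a i.1)
    else Classical.arbitrary _

/-- The behaviour product `℘' ⊙ ℘'^⊥` of behaviours on the two halves `S' = S_{|M'}` and
`S'^⊥ = S_{|M'^⊥}` of a disjoint bipartition of `S`: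
`(℘'⊙℘'^⊥)(a|x) = ℘'(a_{F_x}|x_{F_x}) · ℘'^⊥(a_{I∖F_x}|x_{I∖F_x})`, the factors being the
corresponding marginals (well defined for no-signalling behaviours). -/
def bprod (S : Scenario) (M' : ∀ i, Set (S.M i))
    (p' : Behaviour (S.restrict M'))
    (p'' : Behaviour (S.restrict fun i => (M' i)ᶜ)) :
    Behaviour S :=
  fun x a =>
    marg (S.restrict M') p' (extendInput S M' x)
        {i : (S.restrict M').I | x i.1 ∈ M' i.1} (extendOutput S M' x a) *
    marg (S.restrict fun i => (M' i)ᶜ) p'' (extendInput S (fun i => (M' i)ᶜ) x)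
        {i : (S.restrict fun i => (M' i)ᶜ).I | x i.1 ∈ (M' i.1)ᶜ}
        (extendOutput S (fun i => (M' i)ᶜ) x a)

/-- The product `K' ⊙ K''` of two sets of behaviours on the halves of a bipartition. -/
def bprodSet (S : Scenario) (M' : ∀ i, Set (S.M i))
    (K' : Set (Behaviour (S.restrict M')))
    (K'' : Set (Behaviour (S.restrict fun i => (M' i)ᶜ))) :
    Set (Behaviour S) :=
  Set.image2 (bprod S M') K' K''

end

noncomputable section AuxCorr

open Set

variable (S : Scenario)

/-! ### Linearity of `marg` -/

lemma marg_add' (p q : Behaviour S) (x : InputString S) (V : Set S.I) (a : OutputString S x) :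
    marg S (p + q) x V a = marg S p x V a + marg S q x V a := by
  unfold marg
  rw [← Finset.sum_add_distrib]
  refine Finset.sum_congr rfl fun b _ => ?_
  split_ifs with h <;> simp

lemma marg_smul' (c : ℝ) (p : Behaviour S) (x : InputString S) (V : Set S.I)
    (a : OutputString S x) :
    marg S (c • p) x V a = c * marg S p x V a := by
  unfold marg
  rw [Finset.mul_sum]
  refine Finset.sum_congr rfl fun b _ => ?_
  split_ifs with h <;> simp

variable (M' : ∀ i, Set (S.M i))

/-- `bprod` as a linear map in the first argument. -/
def bprodL1 (p'' : Behaviour (S.restrict fun i => (M' i)ᶜ)) :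
    Behaviour (S.restrict M') →ₗ[ℝ] Behaviour S where
  toFun p' := bprod S M' p' p''
  map_add' p q := by
    funext x a
    simp only [bprod, marg_add', Pi.add_apply, add_mul]
  map_smul' c p := by
    funext x a
    simp only [bprod, marg_smul', Pi.smul_apply, smul_eq_mul, RingHom.id_apply]
    ring

/-- `bprod` as a linear map in the second argument. -/
def bprodL2 (p' : Behaviour (S.restrict M')) :
    Behaviour (S.restrict fun i => (M' i)ᶜ) →ₗ[ℝ] Behaviour S where
  toFun p'' := bprod S M' p' p''
  map_add' p q := by
    funext x a
    simp only [bprod, marg_add', Pi.add_apply, mul_add]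
  map_smul' c p := by
    funext x a
    simp only [bprod, marg_smul', Pi.smul_apply, smul_eq_mul, RingHom.id_apply]
    ring

/-! ### The marginal-recovery linear maps -/

/-- Extension of an input string of a restricted scenario to the full scenario. -/
def extInp1 (N : ∀ i, Set (S.M i)) (x' : InputString (S.restrict N)) : InputString S :=
  fun i => if h : (N i).Nonempty then (show ↥(N i) from x' ⟨i, h⟩).1
    else Classical.arbitrary (S.M i)

lemma extInp1_pos (N : ∀ i, Set (S.M i)) (x' : InputString (S.restrict N)) (i : S.I)
    (h : (N i).Nonempty) : extInp1 S N x' i = (show ↥(N i) from x' ⟨i, h⟩).1 :=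
  dif_pos h

lemma extInp1_mem (N : ∀ i, Set (S.M i)) (x' : InputString (S.restrict N)) (i : S.I)
    (h : (N i).Nonempty) : extInp1 S N x' i ∈ N i := by
  rw [extInp1_pos S N x' i h]
  exact (show ↥(N i) from x' ⟨i, h⟩).2

lemma compl_nonempty' {α : Type} [Nonempty α] (A : Set α) (h : ¬A.Nonempty) : Aᶜ.Nonempty := by
  rw [Set.not_nonempty_iff_eq_empty.mp h, Set.compl_empty]
  exact Set.univ_nonempty

lemma pos_nonempty' {α : Type} [Nonempty α] (A : Set α) (h : ¬Aᶜ.Nonempty) : A.Nonempty := by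
  have := compl_nonempty' Aᶜ h
  rwa [compl_compl] at this

lemma extInp1_mem_compl (x' : InputString (S.restrict M')) (i : S.I) (h : ¬(M' i).Nonempty) :
    extInp1 S M' x' i ∈ (M' i)ᶜ := by
  rw [Set.not_nonempty_iff_eq_empty.mp h, Set.compl_empty]
  exact Set.mem_univ _

lemma extInp1_mem_of_not_compl (x'' : InputString (S.restrict fun i => (M' i)ᶜ)) (i : S.I)
    (h : ¬((M' i)ᶜ).Nonempty) : extInp1 S (fun i => (M' i)ᶜ) x'' i ∈ M' i := by
  have h2 : (M' i)ᶜ = ∅ := Set.not_nonempty_iff_eq_empty.mp h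
  rw [compl_empty_iff] at h2
  rw [h2]
  exact Set.mem_univ _

lemma extendInput_val (N : ∀ i, Set (S.M i)) (x : InputString S) (j : (S.restrict N).I)
    (h : x j.1 ∈ N j.1) : (show ↥(N j.1) from extendInput S N x j).1 = x j.1 := by
  have e : extendInput S N x j = ⟨x j.1, h⟩ := dif_pos h
  show (extendInput S N x j).1 = x j.1
  rw [e]

/-- The recovery map `Φ`, for a general collection `N`, as a linear map. -/
def Phi (N : ∀ i, Set (S.M i)) : Behaviour S →ₗ[ℝ] Behaviour (S.restrict N) where
  toFun p := fun x' a' => ∑ b : OutputString S (extInp1 S N x'),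
    if ∀ i : (S.restrict N).I, HEq (b i.1) (a' i) then p (extInp1 S N x') b else 0
  map_add' p q := by
    funext x' a'
    simp only [Pi.add_apply]
    rw [← Finset.sum_add_distrib]
    refine Finset.sum_congr rfl fun b _ => ?_
    split_ifs with h <;> simp
  map_smul' c p := by
    funext x' a'
    simp only [Pi.smul_apply, smul_eq_mul, RingHom.id_apply]
    rw [Finset.mul_sum]
    refine Finset.sum_congr rfl fun b _ => ?_
    split_ifs with h <;> simp

/-! ### Sum manipulation helpers -/

lemma marg_univ_congr (T : Scenario) (p : Behaviour T) {x y : InputString T} (hxy : x = y)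
    {V : Set T.I} (hV : V = Set.univ) (a : OutputString T x) (a' : OutputString T y)
    (ha : ∀ i, HEq (a i) (a' i)) : marg T p x V a = p y a' := by
  subst hxy
  subst hV
  have haa : a = a' := funext fun i => eq_of_heq (ha i)
  subst haa
  unfold marg
  rw [Finset.sum_eq_single a]
  · rw [if_pos (fun i _ => rfl)]
  · intro b _ hb
    exact if_neg fun h => hb (funext fun i => h i (Set.mem_univ i))
  · exact fun h => absurd (Finset.mem_univ a) h

lemma sum_ite_mul_split {α : Type} [Fintype α] {C : α → Prop} {instC : ∀ b, Decidable (C b)}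
    (f g : α → ℝ) (v : ℝ)
    (hf : ∀ b, C b → f b = v) :
    (∑ b, @ite _ (C b) (instC b) (f b * g b) 0)
      = v * ∑ b, @ite _ (C b) (instC b) (g b) 0 := by
  rw [Finset.mul_sum]
  refine Finset.sum_congr rfl fun b _ => ?_
  by_cases hb : C b
  · rw [if_pos hb, if_pos hb, hf b hb]
  · rw [if_neg hb, if_neg hb, mul_zero]

lemma sum_ite_mul_split' {α : Type} [Fintype α] {C : α → Prop} {instC : ∀ b, Decidable (C b)}
    (f g : α → ℝ) (v : ℝ)
    (hg : ∀ b, C b → g b = v) :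
    (∑ b, @ite _ (C b) (instC b) (f b * g b) 0)
      = v * ∑ b, @ite _ (C b) (instC b) (f b) 0 := by
  rw [Finset.mul_sum]
  refine Finset.sum_congr rfl fun b _ => ?_
  by_cases hb : C b
  · rw [if_pos hb, if_pos hb, hg b hb, mul_comm]
  · rw [if_neg hb, if_neg hb, mul_zero]

lemma sum_sum_unique {α β : Type} [Fintype α] [Fintype β] {C : α → Prop} {D : α → β → Prop}
    {instC : ∀ a, Decidable (C a)} {instD : ∀ a c, Decidable (D a c)}
    (v : β → ℝ) (b0 : β → α) (huniq : ∀ c a, (C a ∧ D a c) ↔ a = b0 c) :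
    (∑ a, @ite _ (C a) (instC a) (∑ c, @ite _ (D a c) (instD a c) (v c) 0) 0) = ∑ c, v c := by
  have h1 : ∀ a : α, (@ite _ (C a) (instC a) (∑ c, @ite _ (D a c) (instD a c) (v c) 0) 0)
      = ∑ c, if C a ∧ D a c then v c else 0 := by
    intro a
    by_cases ha : C a
    · rw [if_pos ha]
      refine Finset.sum_congr rfl fun c _ => ?_
      by_cases hd : D a c
      · rw [if_pos hd, if_pos ⟨ha, hd⟩]
      · rw [if_neg hd, if_neg fun h => hd h.2]
    · rw [if_neg ha]
      exact (Finset.sum_eq_zero fun c _ => if_neg fun h => ha h.1).symm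
  simp only [h1]
  rw [Finset.sum_comm]
  refine Finset.sum_congr rfl fun c _ => ?_
  have h2 : ∀ a : α, (if C a ∧ D a c then v c else 0) = if a = b0 c then v c else 0 := by
    intro a
    by_cases h : a = b0 c
    · rw [if_pos h, if_pos ((huniq c a).mpr h)]
    · rw [if_neg h, if_neg fun hcd => h ((huniq c a).mp hcd)]
  simp only [h2]
  rw [Finset.sum_ite_eq' Finset.univ (b0 c) fun _ => v c]
  simp

/-! ### Reconstruction of the unique compatible global output string -/

/-- The unique output string of `S` compatible with `a'` on the `M'`-parties and with `c`
on the complementary parties. -/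
def recOut (x' : InputString (S.restrict M')) (a' : OutputString (S.restrict M') x')
    (c : OutputString (S.restrict fun i => (M' i)ᶜ)
      (extendInput S (fun i => (M' i)ᶜ) (extInp1 S M' x')))
    (i : S.I) : S.O i (extInp1 S M' x' i) :=
  if h : (M' i).Nonempty then
    cast (congrArg (S.O i) (extInp1_pos S M' x' i h).symm) (a' ⟨i, h⟩)
  else
    cast (congrArg (S.O i)
      (extendInput_val S (fun i => (M' i)ᶜ) (extInp1 S M' x') ⟨i, compl_nonempty' _ h⟩
        (extInp1_mem_compl S M' x' i h)))
      (c ⟨i, compl_nonempty' _ h⟩)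

lemma recOut_heq_pos (x' : InputString (S.restrict M')) (a' : OutputString (S.restrict M') x')
    (c : OutputString (S.restrict fun i => (M' i)ᶜ)
      (extendInput S (fun i => (M' i)ᶜ) (extInp1 S M' x')))
    (i : S.I) (h : (M' i).Nonempty) :
    HEq (recOut S M' x' a' c i) (a' ⟨i, h⟩) := by
  unfold recOut
  rw [dif_pos h]
  exact cast_heq _ _

lemma recOut_heq_neg (x' : InputString (S.restrict M')) (a' : OutputString (S.restrict M') x')
    (c : OutputString (S.restrict fun i => (M' i)ᶜ)
      (extendInput S (fun i => (M' i)ᶜ) (extInp1 S M' x')))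
    (i : S.I) (h : ¬(M' i).Nonempty) :
    HEq (recOut S M' x' a' c i) (c ⟨i, compl_nonempty' _ h⟩) := by
  unfold recOut
  rw [dif_neg h]
  exact cast_heq _ _

/-- Mirror image of `recOut` for the other half of the bipartition. -/
def recOut2 (x'' : InputString (S.restrict fun i => (M' i)ᶜ))
    (a'' : OutputString (S.restrict fun i => (M' i)ᶜ) x'')
    (c : OutputString (S.restrict M')
      (extendInput S M' (extInp1 S (fun i => (M' i)ᶜ) x'')))
    (i : S.I) : S.O i (extInp1 S (fun i => (M' i)ᶜ) x'' i) :=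
  if h : ((M' i)ᶜ).Nonempty then
    cast (congrArg (S.O i) (extInp1_pos S (fun i => (M' i)ᶜ) x'' i h).symm) (a'' ⟨i, h⟩)
  else
    cast (congrArg (S.O i)
      (extendInput_val S M' (extInp1 S (fun i => (M' i)ᶜ) x'') ⟨i, pos_nonempty' _ h⟩
        (extInp1_mem_of_not_compl S M' x'' i h)))
      (c ⟨i, pos_nonempty' _ h⟩)

lemma recOut2_heq_pos (x'' : InputString (S.restrict fun i => (M' i)ᶜ))
    (a'' : OutputString (S.restrict fun i => (M' i)ᶜ) x'')
    (c : OutputString (S.restrict M')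
      (extendInput S M' (extInp1 S (fun i => (M' i)ᶜ) x'')))
    (i : S.I) (h : ((M' i)ᶜ).Nonempty) :
    HEq (recOut2 S M' x'' a'' c i) (a'' ⟨i, h⟩) := by
  unfold recOut2
  rw [dif_pos h]
  exact cast_heq _ _

lemma recOut2_heq_neg (x'' : InputString (S.restrict fun i => (M' i)ᶜ))
    (a'' : OutputString (S.restrict fun i => (M' i)ᶜ) x'')
    (c : OutputString (S.restrict M')
      (extendInput S M' (extInp1 S (fun i => (M' i)ᶜ) x'')))
    (i : S.I) (h : ¬((M' i)ᶜ).Nonempty) :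
    HEq (recOut2 S M' x'' a'' c i) (c ⟨i, pos_nonempty' _ h⟩) := by
  unfold recOut2
  rw [dif_neg h]
  exact cast_heq _ _

/-! ### The recovery identities -/

set_option maxHeartbeats 1000000 in
lemma Phi_bprod_fst (p' : Behaviour (S.restrict M'))
    (p'' : Behaviour (S.restrict fun i => (M' i)ᶜ))
    (hp'' : ∀ x, ∑ a, p'' x a = 1) :
    Phi S M' (bprod S M' p' p'') = p' := by
  funext x' a'
  have hXM : ∀ i : (S.restrict M').I, extInp1 S M' x' i.1 ∈ M' i.1 :=
    fun i => extInp1_mem S M' x' i.1 i.2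
  have hnotM : ∀ i : (S.restrict fun i => (M' i)ᶜ).I,
      extInp1 S M' x' i.1 ∈ (M' i.1)ᶜ → ¬(M' i.1).Nonempty := by
    intro i hi h
    exact (Set.mem_compl_iff _ _).mp hi (extInp1_mem S M' x' i.1 h)
  -- the first factor evaluates to `p' x' a'`
  have hfst : ∀ b : OutputString S (extInp1 S M' x'),
      (∀ i : (S.restrict M').I, HEq (b i.1) (a' i)) →
      marg (S.restrict M') p' (extendInput S M' (extInp1 S M' x'))
        {i : (S.restrict M').I | extInp1 S M' x' i.1 ∈ M' i.1}
        (extendOutput S M' (extInp1 S M' x') b) = p' x' a' := by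
    intro b hb
    refine marg_univ_congr _ p' ?_ ?_ _ a' ?_
    · funext i
      rw [show extendInput S M' (extInp1 S M' x') i = ⟨extInp1 S M' x' i.1, hXM i⟩ from
        dif_pos (hXM i)]
      exact Subtype.ext (extInp1_pos S M' x' i.1 i.2)
    · exact Set.eq_univ_iff_forall.mpr hXM
    · intro i
      refine HEq.trans ?_ (hb i)
      unfold extendOutput
      rw [dif_pos (hXM i)]
      exact cast_heq _ _
  -- the second factor sums to `1`
  have hsnd : (∑ b : OutputString S (extInp1 S M' x'),
      if ∀ i : (S.restrict M').I, HEq (b i.1) (a' i) then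
        marg (S.restrict fun i => (M' i)ᶜ) p''
          (extendInput S (fun i => (M' i)ᶜ) (extInp1 S M' x'))
          {i : (S.restrict fun i => (M' i)ᶜ).I | extInp1 S M' x' i.1 ∈ (M' i.1)ᶜ}
          (extendOutput S (fun i => (M' i)ᶜ) (extInp1 S M' x') b) else 0) = 1 := by
    have huniq : ∀ (c : OutputString (S.restrict fun i => (M' i)ᶜ)
        (extendInput S (fun i => (M' i)ᶜ) (extInp1 S M' x')))
        (b : OutputString S (extInp1 S M' x')),
        ((∀ i : (S.restrict M').I, HEq (b i.1) (a' i)) ∧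
          (∀ j ∈ {i : (S.restrict fun i => (M' i)ᶜ).I | extInp1 S M' x' i.1 ∈ (M' i.1)ᶜ},
            c j = extendOutput S (fun i => (M' i)ᶜ) (extInp1 S M' x') b j)) ↔
          b = recOut S M' x' a' c := by
      intro c b
      constructor
      · rintro ⟨hC, hD⟩
        funext i
        by_cases h : (M' i).Nonempty
        · exact eq_of_heq ((hC ⟨i, h⟩).trans (recOut_heq_pos S M' x' a' c i h).symm)
        · have hj : extInp1 S M' x' i ∈ (M' i)ᶜ := extInp1_mem_compl S M' x' i h
          have hD' := hD ⟨i, compl_nonempty' _ h⟩ hj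
          have h1 : HEq (extendOutput S (fun i => (M' i)ᶜ) (extInp1 S M' x') b
              ⟨i, compl_nonempty' _ h⟩) (b i) := by
            unfold extendOutput
            rw [dif_pos hj]
            exact cast_heq _ _
          have h3 : HEq (c ⟨i, compl_nonempty' _ h⟩) (b i) := by
            rw [hD']
            exact h1
          exact eq_of_heq (h3.symm.trans (recOut_heq_neg S M' x' a' c i h).symm)
      · rintro rfl
        constructor
        · intro i
          exact recOut_heq_pos S M' x' a' c i.1 i.2
        · intro j hj
          have h' : ¬(M' j.1).Nonempty := hnotM j hj
          have hj2 : extInp1 S M' x' j.1 ∈ (M' j.1)ᶜ := hj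
          have h1 : HEq (extendOutput S (fun i => (M' i)ᶜ) (extInp1 S M' x')
              (recOut S M' x' a' c) j) (recOut S M' x' a' c j.1) := by
            unfold extendOutput
            rw [dif_pos hj2]
            exact cast_heq _ _
          exact eq_of_heq ((h1.trans (recOut_heq_neg S M' x' a' c j.1 h')).symm)
    simp only [marg]
    refine Eq.trans (sum_sum_unique _ (recOut S M' x' a') huniq) (hp'' _)
  show (∑ b : OutputString S (extInp1 S M' x'),
      if ∀ i : (S.restrict M').I, HEq (b i.1) (a' i) then
        bprod S M' p' p'' (extInp1 S M' x') b else 0) = p' x' a'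
  simp only [bprod]
  refine Eq.trans (sum_ite_mul_split _ _ _ hfst) ?_
  beta_reduce
  rw [hsnd, mul_one]

set_option maxHeartbeats 1000000 in
lemma Phi_bprod_snd (p' : Behaviour (S.restrict M'))
    (p'' : Behaviour (S.restrict fun i => (M' i)ᶜ))
    (hp' : ∀ x, ∑ a, p' x a = 1) :
    Phi S (fun i => (M' i)ᶜ) (bprod S M' p' p'') = p'' := by
  funext x'' a''
  have hXM : ∀ i : (S.restrict fun i => (M' i)ᶜ).I,
      extInp1 S (fun i => (M' i)ᶜ) x'' i.1 ∈ (M' i.1)ᶜ :=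
    fun i => extInp1_mem S (fun i => (M' i)ᶜ) x'' i.1 i.2
  have hnotM : ∀ i : (S.restrict M').I,
      extInp1 S (fun i => (M' i)ᶜ) x'' i.1 ∈ M' i.1 → ¬((M' i.1)ᶜ).Nonempty := by
    intro i hi h
    exact (Set.mem_compl_iff _ _).mp (extInp1_mem S (fun i => (M' i)ᶜ) x'' i.1 h) hi
  -- the second factor evaluates to `p'' x'' a''`
  have hsnd : ∀ b : OutputString S (extInp1 S (fun i => (M' i)ᶜ) x''),
      (∀ i : (S.restrict fun i => (M' i)ᶜ).I, HEq (b i.1) (a'' i)) →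
      marg (S.restrict fun i => (M' i)ᶜ) p''
        (extendInput S (fun i => (M' i)ᶜ) (extInp1 S (fun i => (M' i)ᶜ) x''))
        {i : (S.restrict fun i => (M' i)ᶜ).I |
          extInp1 S (fun i => (M' i)ᶜ) x'' i.1 ∈ (M' i.1)ᶜ}
        (extendOutput S (fun i => (M' i)ᶜ) (extInp1 S (fun i => (M' i)ᶜ) x'') b)
        = p'' x'' a'' := by
    intro b hb
    refine marg_univ_congr _ p'' ?_ ?_ _ a'' ?_
    · funext i
      rw [show extendInput S (fun i => (M' i)ᶜ) (extInp1 S (fun i => (M' i)ᶜ) x'') i =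
        ⟨extInp1 S (fun i => (M' i)ᶜ) x'' i.1, hXM i⟩ from dif_pos (hXM i)]
      exact Subtype.ext (extInp1_pos S (fun i => (M' i)ᶜ) x'' i.1 i.2)
    · exact Set.eq_univ_iff_forall.mpr hXM
    · intro i
      refine HEq.trans ?_ (hb i)
      unfold extendOutput
      rw [dif_pos (hXM i)]
      exact cast_heq _ _
  -- the first factor sums to `1`
  have hfst : (∑ b : OutputString S (extInp1 S (fun i => (M' i)ᶜ) x''),
      if ∀ i : (S.restrict fun i => (M' i)ᶜ).I, HEq (b i.1) (a'' i) then
        marg (S.restrict M') p'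
          (extendInput S M' (extInp1 S (fun i => (M' i)ᶜ) x''))
          {i : (S.restrict M').I | extInp1 S (fun i => (M' i)ᶜ) x'' i.1 ∈ M' i.1}
          (extendOutput S M' (extInp1 S (fun i => (M' i)ᶜ) x'') b) else 0) = 1 := by
    have huniq : ∀ (c : OutputString (S.restrict M')
        (extendInput S M' (extInp1 S (fun i => (M' i)ᶜ) x'')))
        (b : OutputString S (extInp1 S (fun i => (M' i)ᶜ) x'')),
        ((∀ i : (S.restrict fun i => (M' i)ᶜ).I, HEq (b i.1) (a'' i)) ∧
          (∀ j ∈ {i : (S.restrict M').I | extInp1 S (fun i => (M' i)ᶜ) x'' i.1 ∈ M' i.1},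
            c j = extendOutput S M' (extInp1 S (fun i => (M' i)ᶜ) x'') b j)) ↔
          b = recOut2 S M' x'' a'' c := by
      intro c b
      constructor
      · rintro ⟨hC, hD⟩
        funext i
        by_cases h : ((M' i)ᶜ).Nonempty
        · exact eq_of_heq ((hC ⟨i, h⟩).trans (recOut2_heq_pos S M' x'' a'' c i h).symm)
        · have hj : extInp1 S (fun i => (M' i)ᶜ) x'' i ∈ M' i :=
            extInp1_mem_of_not_compl S M' x'' i h
          have hD' := hD ⟨i, pos_nonempty' _ h⟩ hj
          have h1 : HEq (extendOutput S M' (extInp1 S (fun i => (M' i)ᶜ) x'') b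
              ⟨i, pos_nonempty' _ h⟩) (b i) := by
            unfold extendOutput
            rw [dif_pos hj]
            exact cast_heq _ _
          have h3 : HEq (c ⟨i, pos_nonempty' _ h⟩) (b i) := by
            rw [hD']
            exact h1
          exact eq_of_heq (h3.symm.trans (recOut2_heq_neg S M' x'' a'' c i h).symm)
      · rintro rfl
        constructor
        · intro i
          exact recOut2_heq_pos S M' x'' a'' c i.1 i.2
        · intro j hj
          have h' : ¬((M' j.1)ᶜ).Nonempty := hnotM j hj
          have hj2 : extInp1 S (fun i => (M' i)ᶜ) x'' j.1 ∈ M' j.1 := hj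
          have h1 : HEq (extendOutput S M' (extInp1 S (fun i => (M' i)ᶜ) x'')
              (recOut2 S M' x'' a'' c) j) (recOut2 S M' x'' a'' c j.1) := by
            unfold extendOutput
            rw [dif_pos hj2]
            exact cast_heq _ _
          exact eq_of_heq ((h1.trans (recOut2_heq_neg S M' x'' a'' c j.1 h')).symm)
    simp only [marg]
    refine Eq.trans (sum_sum_unique _ (recOut2 S M' x'' a'') huniq) (hp' _)
  show (∑ b : OutputString S (extInp1 S (fun i => (M' i)ᶜ) x''),
      if ∀ i : (S.restrict fun i => (M' i)ᶜ).I, HEq (b i.1) (a'' i) then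
        bprod S M' p' p'' (extInp1 S (fun i => (M' i)ᶜ) x'') b else 0) = p'' x'' a''
  simp only [bprod]
  refine Eq.trans (sum_ite_mul_split' _ _ _ hsnd) ?_
  beta_reduce
  rw [hfst, mul_one]

/-! ### Convexity helpers -/

lemma conv_rep {E : Type} [AddCommGroup E] [Module ℝ E] {A : Set E} {q : E}
    (hq : q ∈ convexHull ℝ A) :
    ∃ (ι : Type) (t : Finset ι) (w : ι → ℝ) (z : ι → E), (∀ i ∈ t, 0 ≤ w i) ∧
      (∑ i ∈ t, w i = 1) ∧ (∀ i ∈ t, z i ∈ A) ∧ (∑ i ∈ t, w i • z i = q) := by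
  rw [convexHull_eq] at hq
  obtain ⟨ι, t, w, z, h0, h1, hz, hq⟩ := hq
  exact ⟨ι, t, w, z, h0, h1, hz, by rwa [Finset.centerMass_eq_of_sum_1 _ _ h1] at hq⟩

lemma extreme_absorb {E : Type} [AddCommGroup E] [Module ℝ E] {K : Set E}
    {x : E} (hx : x ∈ Set.extremePoints ℝ K) {ι : Type} (t : Finset ι) (w : ι → ℝ) (z : ι → E)
    (h0 : ∀ i ∈ t, 0 ≤ w i) (h1 : ∑ i ∈ t, w i = 1) (hz : ∀ i ∈ t, z i ∈ K)
    (hK : Convex ℝ K)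
    (hsum : ∑ i ∈ t, w i • z i = x) : ∀ j ∈ t, 0 < w j → z j = x := by
  intro j hj hwj
  by_cases hw1 : w j = 1
  · have h := Finset.add_sum_erase t w hj
    rw [h1, hw1] at h
    have hrest : ∑ i ∈ t.erase j, w i = 0 := by linarith
    have hz0 : ∀ i ∈ t.erase j, w i = 0 :=
      (Finset.sum_eq_zero_iff_of_nonneg fun i hi => h0 i (Finset.mem_of_mem_erase hi)).mp hrest
    have hxz : x = w j • z j := by
      rw [← hsum, ← Finset.add_sum_erase t (fun i => w i • z i) hj,
        Finset.sum_eq_zero fun i hi => by rw [hz0 i hi, zero_smul], add_zero]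
    rw [hxz, hw1, one_smul]
  · have hwle : w j ≤ 1 := h1 ▸ Finset.single_le_sum h0 hj
    have hs : (0:ℝ) < 1 - w j := by
      rcases lt_or_eq_of_le hwle with h | h
      · linarith
      · exact absurd h hw1
    have hsum_erase : ∑ i ∈ t.erase j, w i = 1 - w j := by
      have h := Finset.add_sum_erase t w hj
      rw [h1] at h
      linarith
    have hy : (∑ i ∈ t.erase j, (w i / (1 - w j)) • z i) ∈ K := by
      refine hK.sum_mem (fun i hi => div_nonneg (h0 i (Finset.mem_of_mem_erase hi)) hs.le) ?_
        fun i hi => hz i (Finset.mem_of_mem_erase hi)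
      rw [← Finset.sum_div, hsum_erase, div_self hs.ne']
    have hdecomp : w j • z j + (1 - w j) • (∑ i ∈ t.erase j, (w i / (1 - w j)) • z i) = x := by
      rw [Finset.smul_sum]
      have he : ∀ i ∈ t.erase j, (1 - w j) • ((w i / (1 - w j)) • z i) = w i • z i := by
        intro i hi
        rw [smul_smul]
        congr 1
        field_simp
      rw [Finset.sum_congr rfl he, Finset.add_sum_erase t (fun i => w i • z i) hj, hsum]
    exact hx.2 (hz j hj) hy ⟨w j, 1 - w j, hwj, hs, by ring, hdecomp⟩

end AuxCorr

noncomputable section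

/-- If `K' ⊆ NS(S')` and `K'' ⊆ NS(S'^⊥)` are convex polytopes on the halves of a disjoint
bipartition of `S`, then `conv(K' ⊙ K'')` is a convex polytope whose extreme points are
exactly the behaviour products of extreme points: `Ext(conv(K'⊙K'')) = Ext(K') ⊙ Ext(K'')`. -/
theorem convexHull_bprod_polytopes (S : Scenario) [Nonempty S.I] (M' : ∀ i, Set (S.M i))
    (K' : Set (Behaviour (S.restrict M')))
    (K'' : Set (Behaviour (S.restrict fun i => (M' i)ᶜ)))
    (hK'ns : K' ⊆ NSset (S.restrict M'))
    (hK''ns : K'' ⊆ NSset (S.restrict fun i => (M' i)ᶜ))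
    (hK' : ∃ F, F.Finite ∧ K' = convexHull ℝ F)
    (hK'' : ∃ F, F.Finite ∧ K'' = convexHull ℝ F) :
    (∃ G : Set (Behaviour S), G.Finite ∧
      convexHull ℝ (bprodSet S M' K' K'') = convexHull ℝ G) ∧
    Set.extremePoints ℝ (convexHull ℝ (bprodSet S M' K' K'')) =
      bprodSet S M' (Set.extremePoints ℝ K') (Set.extremePoints ℝ K'') := by
  obtain ⟨F', hF'fin, hF'⟩ := hK'
  obtain ⟨F'', hF''fin, hF''⟩ := hK''
  have hK'conv : Convex ℝ K' := hF' ▸ convex_convexHull ℝ F'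
  have hK''conv : Convex ℝ K'' := hF'' ▸ convex_convexHull ℝ F''
  have hbeh' : ∀ p' ∈ K', ∀ x, ∑ a, p' x a = 1 := fun p' h x => ((hK'ns h).1).2 x
  have hbeh'' : ∀ p'' ∈ K'', ∀ x, ∑ a, p'' x a = 1 := fun p'' h x => ((hK''ns h).1).2 x
  have hPhi1 : ∀ p' ∈ K', ∀ p'' ∈ K'', Phi S M' (bprod S M' p' p'') = p' :=
    fun p' _ p'' h'' => Phi_bprod_fst S M' p' p'' (hbeh'' p'' h'')
  have hPhi2 : ∀ p' ∈ K', ∀ p'' ∈ K'', Phi S (fun i => (M' i)ᶜ) (bprod S M' p' p'') = p'' :=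
    fun p' h' p'' _ => Phi_bprod_snd S M' p' p'' (hbeh' p' h')
  -- Part 1 : `conv (K' ⊙ K'') = conv (F' ⊙ F'')`
  have hstep : ∀ p'' ∈ convexHull ℝ F'', ∀ p' ∈ convexHull ℝ F',
      bprod S M' p' p'' ∈ convexHull ℝ (bprodSet S M' F' F'') := by
    intro p'' hp'' p' hp'
    obtain ⟨ι, t, w, z, h0, h1, hz, hs⟩ := conv_rep hp'
    rw [← hs]
    have hb1 : bprod S M' (∑ i ∈ t, w i • z i) p'' = ∑ i ∈ t, w i • bprod S M' (z i) p'' := by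
      rw [show bprod S M' (∑ i ∈ t, w i • z i) p''
          = bprodL1 S M' p'' (∑ i ∈ t, w i • z i) from rfl, map_sum]
      exact Finset.sum_congr rfl fun i _ => by rw [_root_.map_smul]; rfl
    rw [hb1]
    refine (convex_convexHull ℝ _).sum_mem h0 h1 fun i hi => ?_
    obtain ⟨ι2, t2, w2, z2, h02, h12, hz2, hs2⟩ := conv_rep hp''
    rw [← hs2]
    have hb2 : bprod S M' (z i) (∑ j ∈ t2, w2 j • z2 j)
        = ∑ j ∈ t2, w2 j • bprod S M' (z i) (z2 j) := by
      rw [show bprod S M' (z i) (∑ j ∈ t2, w2 j • z2 j)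
          = bprodL2 S M' (z i) (∑ j ∈ t2, w2 j • z2 j) from rfl, map_sum]
      exact Finset.sum_congr rfl fun j _ => by rw [_root_.map_smul]; rfl
    rw [hb2]
    refine (convex_convexHull ℝ _).sum_mem h02 h12 fun j hj => ?_
    exact subset_convexHull ℝ _ ⟨z i, hz i hi, z2 j, hz2 j hj, rfl⟩
  have hhull : convexHull ℝ (bprodSet S M' K' K'') = convexHull ℝ (bprodSet S M' F' F'') := by
    refine Set.Subset.antisymm (convexHull_min ?_ (convex_convexHull ℝ _)) (convexHull_mono ?_)
    · rintro q ⟨p', hp', p'', hp'', rfl⟩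
      exact hstep p'' (hF'' ▸ hp'') p' (hF' ▸ hp')
    · exact Set.image2_subset (hF' ▸ subset_convexHull ℝ F') (hF'' ▸ subset_convexHull ℝ F'')
  -- recovery of the marginals of members of the hull
  have hrec1 : ∀ q ∈ convexHull ℝ (bprodSet S M' K' K''), Phi S M' q ∈ K' := by
    intro q hq
    obtain ⟨ι, t, w, z, h0, h1, hz, hs⟩ := conv_rep hq
    rw [← hs, map_sum]
    have hterm : ∀ i ∈ t, Phi S M' (w i • z i) = w i • Phi S M' (z i) :=
      fun i _ => _root_.map_smul _ _ _
    rw [Finset.sum_congr rfl hterm]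
    refine hK'conv.sum_mem h0 h1 fun i hi => ?_
    obtain ⟨u, hu, v, hv, huv⟩ := hz i hi
    rw [← huv, hPhi1 u hu v hv]
    exact hu
  have hrec2 : ∀ q ∈ convexHull ℝ (bprodSet S M' K' K''),
      Phi S (fun i => (M' i)ᶜ) q ∈ K'' := by
    intro q hq
    obtain ⟨ι, t, w, z, h0, h1, hz, hs⟩ := conv_rep hq
    rw [← hs, map_sum]
    have hterm : ∀ i ∈ t, Phi S (fun i => (M' i)ᶜ) (w i • z i)
        = w i • Phi S (fun i => (M' i)ᶜ) (z i) := fun i _ => _root_.map_smul _ _ _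
    rw [Finset.sum_congr rfl hterm]
    refine hK''conv.sum_mem h0 h1 fun i hi => ?_
    obtain ⟨u, hu, v, hv, huv⟩ := hz i hi
    rw [← huv, hPhi2 u hu v hv]
    exact hv
  -- rigidity : a member of the hull with extreme marginals is the corresponding product
  have hrig : ∀ e' ∈ Set.extremePoints ℝ K', ∀ e'' ∈ Set.extremePoints ℝ K'',
      ∀ q ∈ convexHull ℝ (bprodSet S M' K' K''),
      Phi S M' q = e' → Phi S (fun i => (M' i)ᶜ) q = e'' → q = bprod S M' e' e'' := by
    intro e' he' e'' he'' q hq hq1 hq2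
    obtain ⟨ι, t, w, z, h0, h1, hz, hs⟩ := conv_rep hq
    have hz' : ∀ i, i ∈ t → ∃ u, u ∈ K' ∧ ∃ v, v ∈ K'' ∧ bprod S M' u v = z i := hz
    choose! u hu v hv huv using hz'
    have hPhiq1 : Phi S M' q = ∑ i ∈ t, w i • u i := by
      rw [← hs, map_sum]
      refine Finset.sum_congr rfl fun i hi => ?_
      rw [_root_.map_smul, ← huv i hi, hPhi1 (u i) (hu i hi) (v i) (hv i hi)]
    have hPhiq2 : Phi S (fun i => (M' i)ᶜ) q = ∑ i ∈ t, w i • v i := by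
      rw [← hs, map_sum]
      refine Finset.sum_congr rfl fun i hi => ?_
      rw [_root_.map_smul, ← huv i hi, hPhi2 (u i) (hu i hi) (v i) (hv i hi)]
    have habs1 : ∀ i ∈ t, 0 < w i → u i = e' :=
      extreme_absorb he' t w u h0 h1 hu hK'conv (hPhiq1.symm.trans hq1)
    have habs2 : ∀ i ∈ t, 0 < w i → v i = e'' :=
      extreme_absorb he'' t w v h0 h1 hv hK''conv (hPhiq2.symm.trans hq2)
    rw [← hs]
    have hterm : ∀ i ∈ t, w i • z i = w i • bprod S M' e' e'' := by
      intro i hi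
      rcases (h0 i hi).lt_or_eq with h | h
      · rw [← huv i hi, habs1 i hi h, habs2 i hi h]
      · rw [← h, zero_smul, zero_smul]
    rw [Finset.sum_congr rfl hterm, ← Finset.sum_smul, h1, one_smul]
  -- Part 2 : the extreme points
  have hext : Set.extremePoints ℝ (convexHull ℝ (bprodSet S M' K' K''))
      = bprodSet S M' (Set.extremePoints ℝ K') (Set.extremePoints ℝ K'') := by
    apply Set.Subset.antisymm
    · intro e he
      obtain ⟨p', hp', p'', hp'', rfl⟩ := extremePoints_convexHull_subset he
      refine ⟨p', ⟨hp', fun x₁ hx₁ x₂ hx₂ hseg => ?_⟩, p'',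
        ⟨hp'', fun x₁ hx₁ x₂ hx₂ hseg => ?_⟩, rfl⟩
      · obtain ⟨a, b, ha, hb, hab, habx⟩ := hseg
        have hdecomp : bprod S M' p' p'' = a • bprod S M' x₁ p'' + b • bprod S M' x₂ p'' := by
          rw [show bprod S M' p' p'' = bprodL1 S M' p'' p' from rfl, ← habx, _root_.map_add,
            _root_.map_smul, _root_.map_smul]
          rfl
        have h1mem : bprod S M' x₁ p'' ∈ convexHull ℝ (bprodSet S M' K' K'') :=
          subset_convexHull ℝ _ ⟨x₁, hx₁, p'', hp'', rfl⟩
        have h2mem : bprod S M' x₂ p'' ∈ convexHull ℝ (bprodSet S M' K' K'') :=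
          subset_convexHull ℝ _ ⟨x₂, hx₂, p'', hp'', rfl⟩
        have hex := he.2 h1mem h2mem ⟨a, b, ha, hb, hab, hdecomp.symm⟩
        have h1 := congrArg (fun q => Phi S M' q) hex
        rwa [hPhi1 x₁ hx₁ p'' hp'', hPhi1 p' hp' p'' hp''] at h1
      · obtain ⟨a, b, ha, hb, hab, habx⟩ := hseg
        have hdecomp : bprod S M' p' p'' = a • bprod S M' p' x₁ + b • bprod S M' p' x₂ := by
          rw [show bprod S M' p' p'' = bprodL2 S M' p' p'' from rfl, ← habx, _root_.map_add,
            _root_.map_smul, _root_.map_smul]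
          rfl
        have h1mem : bprod S M' p' x₁ ∈ convexHull ℝ (bprodSet S M' K' K'') :=
          subset_convexHull ℝ _ ⟨p', hp', x₁, hx₁, rfl⟩
        have h2mem : bprod S M' p' x₂ ∈ convexHull ℝ (bprodSet S M' K' K'') :=
          subset_convexHull ℝ _ ⟨p', hp', x₂, hx₂, rfl⟩
        have hex := he.2 h1mem h2mem ⟨a, b, ha, hb, hab, hdecomp.symm⟩
        have h1 := congrArg (fun q => Phi S (fun i => (M' i)ᶜ) q) hex
        rwa [hPhi2 p' hp' x₁ hx₁, hPhi2 p' hp' p'' hp''] at h1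
    · rintro e ⟨e', he', e'', he'', rfl⟩
      have he'K : e' ∈ K' := he'.1
      have he''K : e'' ∈ K'' := he''.1
      have hemem : bprod S M' e' e'' ∈ convexHull ℝ (bprodSet S M' K' K'') :=
        subset_convexHull ℝ _ ⟨e', he'K, e'', he''K, rfl⟩
      refine ⟨hemem, fun x₁ hx₁ x₂ hx₂ hseg => ?_⟩
      obtain ⟨a, b, ha, hb, hab, habx⟩ := hseg
      have hseg1 : e' ∈ openSegment ℝ (Phi S M' x₁) (Phi S M' x₂) := by
        refine ⟨a, b, ha, hb, hab, ?_⟩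
        have h1 := congrArg (fun q => Phi S M' q) habx
        rw [_root_.map_add, _root_.map_smul, _root_.map_smul, hPhi1 e' he'K e'' he''K] at h1
        exact h1
      have hseg2 : e'' ∈ openSegment ℝ
          (Phi S (fun i => (M' i)ᶜ) x₁) (Phi S (fun i => (M' i)ᶜ) x₂) := by
        refine ⟨a, b, ha, hb, hab, ?_⟩
        have h1 := congrArg (fun q => Phi S (fun i => (M' i)ᶜ) q) habx
        rw [_root_.map_add, _root_.map_smul, _root_.map_smul, hPhi2 e' he'K e'' he''K] at h1
        exact h1
      have hx1' := he'.2 (hrec1 x₁ hx₁) (hrec1 x₂ hx₂) hseg1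
      have hx2' := he''.2 (hrec2 x₁ hx₁) (hrec2 x₂ hx₂) hseg2
      exact hrig e' he' e'' he'' x₁ hx₁ hx1' hx2'
  exact ⟨⟨bprodSet S M' F' F'', Set.Finite.image2 _ hF'fin hF''fin, hhull⟩, hext⟩

end
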